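/- For every controlled Markov process and every discount factor γ ∈ (0,1), there exists a Markovian policy π* such that H(d_γ^{π*}) equals the supremum of H(d_γ^π) over all (possibly non-Markovian, possibly randomized) policies π; that is, a Markovian policy maximizes the entropy of the γ-discounted state distribution over the class of all policies. -/

import Mathlib

open scoped BigOperators

/-- A controlled Markov process over finite state space `S` and action space `A`:
a transition kernel `P` and an initial distribution `μ`. -/
structure CMP (S A : Type) [Fintype S] [Fintype A] where
  P : S → A → S → ℝ
  P_nonneg : ∀ s a s', 0 ≤ P s a s'
  P_sum_one : ∀ s a, ∑ s', P s a s' = 1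
  μ : S → ℝ
  μ_nonneg : ∀ s, 0 ≤ μ s
  μ_sum_one : ∑ s, μ s = 1

/-- A history of `t` steps: states `s_0, …, s_t` and actions `a_0, …, a_{t-1}`. -/
abbrev Hist (S A : Type) (t : ℕ) : Type := (Fin (t + 1) → S) × (Fin t → A)

/-- A continuation of `k` further steps: actions `a_0, …, a_{k-1}` together with the
states those actions lead to. -/
abbrev Contin (S A : Type) (k : ℕ) : Type := (Fin k → A) × (Fin k → S)

/-- A general (possibly non-Markovian, possibly randomized) policy: for every time `t`
and history of length `t`, a probability distribution over actions. -/
structure Policy (S A : Type) [Fintype A] where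
  p : ∀ t : ℕ, Hist S A t → A → ℝ
  nonneg : ∀ t h a, 0 ≤ p t h a
  sum_one : ∀ t h, ∑ a, p t h a = 1

/-- A Markovian (randomized, time-dependent) policy: for every time `t` and current
state `s`, a probability distribution over actions. -/
structure MPolicy (S A : Type) [Fintype A] where
  p : ℕ → S → A → ℝ
  nonneg : ∀ t s a, 0 ≤ p t s a
  sum_one : ∀ t s, ∑ a, p t s a = 1

/-- The last (current) state of a history. -/
def lastState {S A : Type} {t : ℕ} (h : Hist S A t) : S := h.1 (Fin.last t)

/-- A Markovian policy viewed as a general policy. -/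
def MPolicy.toPolicy {S A : Type} [Fintype A] (m : MPolicy S A) : Policy S A where
  p := fun t h a => m.p t (lastState h) a
  nonneg := fun t h a => m.nonneg t _ a
  sum_one := fun t h => m.sum_one t _

/-- The general policy induced by a deterministic non-Markovian policy
(a function from histories to actions). -/
def detPolicy {S A : Type} [Fintype A] [DecidableEq A] (f : ∀ t : ℕ, Hist S A t → A) :
    Policy S A where
  p := fun t h a => if a = f t h then 1 else 0
  nonneg := by intro t h a; (try dsimp only); split <;> norm_num
  sum_one := by intro t h; simp

/-- The length-`i` prefix of a history. -/
def histTake {S A : Type} {t : ℕ} (h : Hist S A t) (i : ℕ) (hi : i ≤ t) : Hist S A i :=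
  (fun j => h.1 ⟨(j : ℕ), by have := j.isLt; omega⟩,
   fun j => h.2 ⟨(j : ℕ), by have := j.isLt; omega⟩)

/-- The probability that policy `π` generates the history `h` when interacting with
the CMP `M` (initial state from `μ`, actions from `π`, transitions from `P`). -/
noncomputable def histProb {S A : Type} [Fintype S] [Fintype A]
    (M : CMP S A) (π : Policy S A) {t : ℕ} (h : Hist S A t) : ℝ :=
  M.μ (h.1 0) * ∏ i : Fin t,
    (π.p i (histTake h i (Nat.le_of_lt i.isLt)) (h.2 i) *
      M.P (h.1 i.castSucc) (h.2 i) (h.1 i.succ))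

/-- The `t`-step state distribution `d_t^π(s) = Pr(s_t = s)`. -/
noncomputable def stateDist {S A : Type} [Fintype S] [Fintype A] [DecidableEq S]
    (M : CMP S A) (π : Policy S A) (t : ℕ) (s : S) : ℝ :=
  ∑ h : Hist S A t, if lastState h = s then histProb M π h else 0

/-- Shannon entropy of a distribution on a finite set (`0 log 0 = 0` since `Real.log 0 = 0`). -/
noncomputable def entropy {S : Type} [Fintype S] (d : S → ℝ) : ℝ :=
  -∑ s, d s * Real.log (d s)

/-- The state visitation frequency of a trajectory with `n+1` states. -/
noncomputable def visitFreq {S A : Type} [Fintype S] [DecidableEq S] {n : ℕ}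
    (h : Hist S A n) (s : S) : ℝ :=
  (∑ i : Fin (n + 1), if h.1 i = s then (1 : ℝ) else 0) / ((n : ℝ) + 1)

/-- The marginal state distribution `d_T^π(s) = (1/T) ∑_{t<T} d_t^π(s)`. -/
noncomputable def marginalDist {S A : Type} [Fintype S] [Fintype A] [DecidableEq S]
    (M : CMP S A) (π : Policy S A) (T : ℕ) (s : S) : ℝ :=
  (1 / (T : ℝ)) * ∑ t ∈ Finset.range T, stateDist M π t s

/-- The `γ`-discounted state distribution `d_γ^π(s) = (1-γ) ∑_t γ^t d_t^π(s)`. -/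
noncomputable def discountedDist {S A : Type} [Fintype S] [Fintype A] [DecidableEq S]
    (M : CMP S A) (π : Policy S A) (γ : ℝ) (s : S) : ℝ :=
  (1 - γ) * ∑' t : ℕ, γ ^ t * stateDist M π t s

/-- Concatenation of a length-`t` history with a `k`-step continuation. -/
def histAppend {S A : Type} {t k : ℕ} (h : Hist S A t) (c : Contin S A k) : Hist S A (t + k) :=
  (fun j => if hj : (j : ℕ) ≤ t then h.1 ⟨(j : ℕ), by omega⟩
            else c.2 ⟨(j : ℕ) - t - 1, by have := j.isLt; omega⟩,
   fun j => if hj : (j : ℕ) < t then h.2 ⟨(j : ℕ), hj⟩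
            else c.1 ⟨(j : ℕ) - t, by have := j.isLt; omega⟩)

/-- The probability that, after the prefix history `h`, running `π` (conditioned on the
full history) produces the `k`-step continuation `c`. -/
noncomputable def contProb {S A : Type} [Fintype S] [Fintype A]
    (M : CMP S A) (π : Policy S A) {t k : ℕ} (h : Hist S A t) (c : Contin S A k) : ℝ :=
  ∏ i : Fin k,
    (π.p (t + (i : ℕ))
        (histTake (histAppend h c) (t + (i : ℕ)) (by have := i.isLt; omega))
        ((histAppend h c).2 ⟨t + (i : ℕ), by have := i.isLt; omega⟩) *
      M.P ((histAppend h c).1 ⟨t + (i : ℕ), by have := i.isLt; omega⟩)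
        ((histAppend h c).2 ⟨t + (i : ℕ), by have := i.isLt; omega⟩)
        ((histAppend h c).1 ⟨t + (i : ℕ) + 1, by have := i.isLt; omega⟩))

/-- The expected entropy of the state visitation frequency of the completed trajectory,
when running `π` for `k` further steps after the prefix history `h`. -/
noncomputable def expEntFrom {S A : Type} [Fintype S] [Fintype A] [DecidableEq S]
    (M : CMP S A) (π : Policy S A) {t : ℕ} (k : ℕ) (h : Hist S A t) : ℝ :=
  ∑ c : Contin S A k, contProb M π h c * entropy (visitFreq (histAppend h c))

/-- A history has positive probability (under some policy) iff its initial state and all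
its transitions have positive probability. -/
def Reachable {S A : Type} [Fintype S] [Fintype A] (M : CMP S A) {t : ℕ}
    (h : Hist S A t) : Prop :=
  0 < M.μ (h.1 0) ∧ ∀ i : Fin t, 0 < M.P (h.1 i.castSucc) (h.2 i) (h.1 i.succ)

/-! Replacing a policy `π` by the Markovian policy that plays `a` in state `s` at time `t` with
probability `Pr(s_t = s, a_t = a) / Pr(s_t = s)` preserves every state-action marginal (induction
on `t`), hence the discounted state distribution. So it suffices to maximise over Markovian
policies, which form the compact product `ℕ → S → Δ(A)`; on it the discounted entropy is
continuous, since each `d_t` depends continuously on finitely many coordinates and the series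
`∑ γ^t d_t` is dominated by `∑ |γ|^t`. -/

open Finset

section Histories
variable {S A : Type} {t : ℕ}

def histSnoc (h : Hist S A t) (a : A) (s : S) : Hist S A (t + 1) :=
  (Fin.snoc h.1 s, Fin.snoc h.2 a)

@[simp]
lemma lastState_histSnoc (h : Hist S A t) (a : A) (s : S) :
    lastState (histSnoc h a s) = s :=
  Fin.snoc_last (α := fun _ => S) ..

lemma histTake_histSnoc (h : Hist S A t) (a : A) (s : S) {i : ℕ} (hi : i ≤ t) :
    histTake (histSnoc h a s) i (hi.trans t.le_succ) = histTake h i hi := by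
  ext j <;> simp only [histTake, histSnoc] <;>
    rw [Fin.snoc, dif_pos (by simp only; omega)] <;> rfl

def histSnocEquiv (t : ℕ) : Hist S A t × A × S ≃ Hist S A (t + 1) where
  toFun x := histSnoc x.1 x.2.1 x.2.2
  invFun h := ((Fin.init h.1, Fin.init h.2), h.2 (Fin.last t), h.1 (Fin.last (t + 1)))
  left_inv := fun ⟨h, a, s⟩ => by simp [histSnoc]
  right_inv := fun h => by simp [histSnoc]

lemma sum_hist_succ {β : Type*} [AddCommMonoid β] [Fintype S] [Fintype A]
    (f : Hist S A (t + 1) → β) :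
    ∑ h, f h = ∑ h : Hist S A t, ∑ a, ∑ s, f (histSnoc h a s) := by
  rw [← (histSnocEquiv t).sum_comp, Fintype.sum_prod_type]
  simp only [Fintype.sum_prod_type]
  rfl

lemma sum_hist_zero {β : Type*} [AddCommMonoid β] [Fintype S] [Fintype A]
    (f : Hist S A 0 → β) :
    ∑ h, f h = ∑ s, f (fun _ => s, Fin.elim0) := by
  rw [Fintype.sum_prod_type, ← (Equiv.funUnique (Fin 1) S).symm.sum_comp]
  exact sum_congr rfl fun s _ =>
    (Fintype.sum_unique _).trans (congrArg f (Prod.ext rfl (Subsingleton.elim _ _)))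

end Histories

section Distributions
variable {S A : Type} [Fintype S] [Fintype A] (M : CMP S A) (π : Policy S A)

lemma histProb_histSnoc {t : ℕ} (h : Hist S A t) (a : A) (s : S) :
    histProb M π (histSnoc h a s) = histProb M π h * (π.p t h a * M.P (lastState h) a s) := by
  have hinit : ∀ i : Fin t, histTake (histSnoc h a s) i.castSucc i.castSucc.is_le'
      = histTake h i i.is_le' := fun i => histTake_histSnoc h a s _
  have hlast : histTake (histSnoc h a s) (Fin.last t) (Fin.last t).is_le' = h :=
    histTake_histSnoc h a s le_rfl
  simp only [histProb, Fin.prod_univ_castSucc, hinit, hlast]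
  have hzero : Fin.snoc (α := fun _ => S) h.1 s 0 = h.1 0 := Fin.snoc_castSucc (i := 0) ..
  simp only [histSnoc, lastState, Fin.succ_castSucc, Fin.snoc_castSucc, Fin.succ_last,
    Fin.snoc_last, hzero, Fin.val_last, Fin.val_castSucc]
  ring

lemma histProb_nonneg {t : ℕ} (h : Hist S A t) : 0 ≤ histProb M π h :=
  mul_nonneg (M.μ_nonneg _) (prod_nonneg fun _ _ => mul_nonneg (π.nonneg ..) (M.P_nonneg ..))

variable [DecidableEq S]

lemma stateDist_nonneg (t : ℕ) (s : S) : 0 ≤ stateDist M π t s :=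
  sum_nonneg fun h _ => by split_ifs <;> simp [histProb_nonneg]

lemma stateDist_zero : stateDist M π 0 = M.μ := by
  ext s
  simp [stateDist, sum_hist_zero, histProb, lastState]

noncomputable def stateActionDist (t : ℕ) (s : S) (a : A) : ℝ :=
  ∑ h : Hist S A t, if lastState h = s then histProb M π h * π.p t h a else 0

lemma stateActionDist_nonneg (t : ℕ) (s : S) (a : A) : 0 ≤ stateActionDist M π t s a :=
  sum_nonneg fun h _ => by split_ifs <;> simp [mul_nonneg, histProb_nonneg, π.nonneg]

lemma sum_stateActionDist (t : ℕ) (s : S) :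
    ∑ a, stateActionDist M π t s a = stateDist M π t s := by
  simp only [stateActionDist, stateDist]
  rw [sum_comm]
  refine sum_congr rfl fun h _ => ?_
  split_ifs <;> simp [← mul_sum, π.sum_one]

lemma stateActionDist_le_stateDist (t : ℕ) (s : S) (a : A) :
    stateActionDist M π t s a ≤ stateDist M π t s := by
  rw [← sum_stateActionDist]
  exact single_le_sum (fun a _ => stateActionDist_nonneg M π t s a) (mem_univ a)

lemma stateDist_succ (t : ℕ) (s' : S) :
    stateDist M π (t + 1) s' = ∑ s, ∑ a, stateActionDist M π t s a * M.P s a s' := by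
  simp only [stateDist, stateActionDist, sum_hist_succ, lastState_histSnoc, histProb_histSnoc,
    sum_mul, ite_mul, zero_mul, sum_ite_eq', mem_univ, if_true]
  rw [sum_comm]
  conv_rhs => rw [sum_comm]
  refine sum_congr rfl fun a _ => ?_
  conv_rhs => rw [sum_comm]
  simp [sum_ite_eq, mul_assoc]

lemma sum_stateDist (t : ℕ) : ∑ s, stateDist M π t s = 1 := by
  induction t with
  | zero => rw [stateDist_zero, M.μ_sum_one]
  | succ t ih =>
    calc ∑ s', stateDist M π (t + 1) s'
        = ∑ s, ∑ a, stateActionDist M π t s a * ∑ s', M.P s a s' := by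
          simp only [stateDist_succ, mul_sum]
          rw [sum_comm]
          exact sum_congr rfl fun _ _ => sum_comm
      _ = ∑ s, stateDist M π t s := by simp [M.P_sum_one, sum_stateActionDist]
      _ = 1 := ih

lemma stateDist_le_one (t : ℕ) (s : S) : stateDist M π t s ≤ 1 :=
  sum_stateDist M π t ▸ single_le_sum (fun s _ => stateDist_nonneg M π t s) (mem_univ s)

end Distributions

section Markovization
variable {S A : Type} [Fintype S] [Fintype A] [DecidableEq S] (M : CMP S A)

lemma stateActionDist_toPolicy (m : MPolicy S A) (t : ℕ) (s : S) (a : A) :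
    stateActionDist M m.toPolicy t s a = m.p t s a * stateDist M m.toPolicy t s := by
  simp only [stateActionDist, stateDist, mul_sum]
  refine sum_congr rfl fun h _ => ?_
  split_ifs with hs
  · simp [MPolicy.toPolicy, hs, mul_comm]
  · simp

variable [Nonempty A] (π : Policy S A)

-- Unreached states get the uniform distribution; any choice would do.
noncomputable def markovize : MPolicy S A where
  p t s a := if stateDist M π t s = 0 then (Fintype.card A : ℝ)⁻¹
    else stateActionDist M π t s a / stateDist M π t s
  nonneg t s a := by
    split_ifs
    · positivity
    · exact div_nonneg (stateActionDist_nonneg ..) (stateDist_nonneg ..)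
  sum_one t s := by
    split_ifs with hs
    · simp
    · rw [← sum_div, sum_stateActionDist, div_self hs]

lemma markovize_p_mul_stateDist (t : ℕ) (s : S) (a : A) :
    (markovize M π).p t s a * stateDist M π t s = stateActionDist M π t s a := by
  by_cases hs : stateDist M π t s = 0
  · have hsa : stateActionDist M π t s a = 0 :=
      le_antisymm (hs ▸ stateActionDist_le_stateDist M π t s a) (stateActionDist_nonneg ..)
    simp [hs, hsa]
  · simp [markovize, hs]

lemma stateDist_markovize (t : ℕ) :
    stateDist M (markovize M π).toPolicy t = stateDist M π t := by
  induction t with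
  | zero => simp only [stateDist_zero]
  | succ t ih =>
    ext s'
    simp only [stateDist_succ, stateActionDist_toPolicy, ih, markovize_p_mul_stateDist]

lemma discountedDist_markovize (γ : ℝ) :
    discountedDist M (markovize M π).toPolicy γ = discountedDist M π γ := by
  ext s
  simp only [discountedDist, stateDist_markovize]

end Markovization

section Continuity
variable {S A : Type} [Fintype S] [Fintype A] [DecidableEq S] (M : CMP S A)
  {X : Type*} [TopologicalSpace X] {m : X → MPolicy S A}

lemma continuous_stateDist (hm : ∀ t s a, Continuous fun x => (m x).p t s a) (t : ℕ) (s : S) :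
    Continuous fun x => stateDist M (m x).toPolicy t s := by
  refine continuous_finsetSum _ fun h _ => ?_
  split_ifs
  · simp only [histProb, MPolicy.toPolicy]
    fun_prop
  · exact continuous_const

lemma continuous_discountedDist {γ : ℝ} (hγ : |γ| < 1)
    (hm : ∀ t s a, Continuous fun x => (m x).p t s a) (s : S) :
    Continuous fun x => discountedDist M (m x).toPolicy γ s := by
  refine continuous_const.mul (continuous_tsum
    (fun t => continuous_const.mul (continuous_stateDist M hm t s))
    (summable_geometric_of_lt_one (abs_nonneg γ) hγ) fun t x => ?_)
  rw [norm_mul, norm_pow, Real.norm_eq_abs, Real.norm_eq_abs,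
    abs_of_nonneg (stateDist_nonneg ..)]
  exact mul_le_of_le_one_right (by positivity) (stateDist_le_one ..)

end Continuity

lemma continuous_entropy {S : Type} [Fintype S] : Continuous (entropy : (S → ℝ) → ℝ) := by
  unfold entropy
  fun_prop

def MPolicy.ofSimplex {S A : Type} [Fintype A] (q : ℕ → S → stdSimplex ℝ A) :
    MPolicy S A where
  p t s := q t s
  nonneg t s := (q t s).2.1
  sum_one t s := (q t s).2.2

lemma MPolicy.continuous_ofSimplex_p {S A : Type} [Fintype A] (t : ℕ) (s : S) (a : A) :
    Continuous fun q : ℕ → S → stdSimplex ℝ A => (ofSimplex q).p t s a :=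
  (continuous_apply a).comp (continuous_subtype_val.comp
    ((continuous_apply s).comp (continuous_apply t)))

lemma MPolicy.exists_forall_ge {S A : Type} [Fintype A] [Nonempty A] {F : MPolicy S A → ℝ}
    (hF : Continuous fun q => F (MPolicy.ofSimplex q)) : ∃ m, ∀ m', F m' ≤ F m := by
  obtain ⟨q, hq⟩ :=
    hF.exists_forall_ge (by rw [Filter.cocompact_eq_bot]; exact Filter.tendsto_bot)
  exact ⟨ofSimplex q, fun m' => hq fun t s =>
    (⟨m'.p t s, m'.nonneg t s, m'.sum_one t s⟩ : stdSimplex ℝ A)⟩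

theorem markovian_maximizes_discounted_entropy_general
    {S A : Type} [Fintype S] [Fintype A] [Nonempty A] [DecidableEq S]
    (M : CMP S A) (γ : ℝ) (hγ : γ ∈ Set.Ioo (0 : ℝ) 1) :
    ∃ π' : MPolicy S A,
      entropy (fun s => discountedDist M π'.toPolicy γ s)
        = ⨆ π : Policy S A, entropy (fun s => discountedDist M π γ s) := by
  have hγ_abs : |γ| < 1 := abs_lt.2 ⟨by linarith [hγ.1], hγ.2⟩
  obtain ⟨m, hm⟩ :=
    MPolicy.exists_forall_ge (F := fun m => entropy (discountedDist M m.toPolicy γ))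
      (continuous_entropy.comp (continuous_pi fun s =>
        continuous_discountedDist M hγ_abs MPolicy.continuous_ofSimplex_p s))
  have hgreatest : IsGreatest (Set.range fun π : Policy S A => entropy (discountedDist M π γ))
      (entropy (discountedDist M m.toPolicy γ)) := by
    refine ⟨⟨m.toPolicy, rfl⟩, Set.forall_mem_range.2 fun π => ?_⟩
    simpa only [discountedDist_markovize] using hm (markovize M π)
  exact ⟨m, hgreatest.csSup_eq.symm⟩

/-- for every discount factor `γ ∈ (0,1)` there is a Markovian policy whose
`γ`-discounted state distribution entropy attains the supremum over all (possibly
non-Markovian, possibly randomized) policies. -/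
theorem markovian_maximizes_discounted_entropy
    {S A : Type} [Fintype S] [Fintype A] [Nonempty S] [Nonempty A] [DecidableEq S]
    (M : CMP S A) (γ : ℝ) (hγ : γ ∈ Set.Ioo (0 : ℝ) 1) :
    ∃ π' : MPolicy S A,
      entropy (fun s => discountedDist M π'.toPolicy γ s)
        = ⨆ π : Policy S A, entropy (fun s => discountedDist M π γ s) :=
  markovian_maximizes_discounted_entropy_general M γ hγ
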